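/- arXiv:2309.02073 — 4 statements merged into one kernel-verified Lean document; each statement's English description precedes it below -/
import Mathlib

section
/- Let A_1, …, A_q be n×n real matrices and for each l let α_{l1} ≥ … ≥ α_{ln} ≥ 0 be the singular values of A_l (square roots of eigenvalues of A_l A_lᵀ) in descending order. Then |trace(A_1 A_2 ⋯ A_q)| ≤ ∑_{i=1}^n α_{1i} α_{2i} ⋯ α_{qi}. -/
open Finset Matrix

variable {n : ℕ}

/-- `M` is an ℓ²-contraction. -/
def Contr (M : Matrix (Fin n) (Fin n) ℝ) : Prop :=
  ∀ x : Fin n → ℝ, (M *ᵥ x) ⬝ᵥ (M *ᵥ x) ≤ x ⬝ᵥ x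

lemma gram (M : Matrix (Fin n) (Fin n) ℝ) (x y : Fin n → ℝ) :
    (M *ᵥ x) ⬝ᵥ (M *ᵥ y) = x ⬝ᵥ ((Mᵀ * M) *ᵥ y) := by
  conv_rhs => rw [← mulVec_mulVec, dotProduct_mulVec, vecMul_transpose]

lemma Contr.mul {M N : Matrix (Fin n) (Fin n) ℝ} (hM : Contr M) (hN : Contr N) :
    Contr (M * N) := fun x => by
  rw [← mulVec_mulVec]
  exact le_trans (hM _) (hN x)

lemma contr_of_orth {U : Matrix (Fin n) (Fin n) ℝ} (h : Uᵀ * U = 1) : Contr U := fun x => by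
  rw [_root_.gram, h, one_mulVec]

lemma dotProduct_self_nn (x : Fin n → ℝ) : 0 ≤ x ⬝ᵥ x :=
  Finset.sum_nonneg fun i _ => mul_self_nonneg _

lemma contr_of_idem {V : Matrix (Fin n) (Fin n) ℝ} (h : (Vᵀ * V) * (Vᵀ * V) = Vᵀ * V) :
    Contr V := fun x => by
  have hsym : (Vᵀ * V)ᵀ = Vᵀ * V := by simp [Matrix.transpose_mul]
  have hid : (1 - Vᵀ * V)ᵀ * (1 - Vᵀ * V) = 1 - Vᵀ * V := by
    rw [transpose_sub, transpose_one, hsym]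
    simp only [sub_mul, mul_sub, one_mul, mul_one, h]
    abel
  have h1 : (V *ᵥ x) ⬝ᵥ (V *ᵥ x) = x ⬝ᵥ ((Vᵀ * V) *ᵥ x) := gram V x x
  have h2 : ((1 - Vᵀ * V) *ᵥ x) ⬝ᵥ ((1 - Vᵀ * V) *ᵥ x) = x ⬝ᵥ ((1 - Vᵀ * V) *ᵥ x) := by
    rw [_root_.gram, hid]
  have h3 : x ⬝ᵥ ((1 - Vᵀ * V) *ᵥ x) = x ⬝ᵥ x - x ⬝ᵥ ((Vᵀ * V) *ᵥ x) := by
    rw [sub_mulVec, one_mulVec, dotProduct_sub]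
  have h4 := dotProduct_self_nn ((1 - Vᵀ * V) *ᵥ x)
  linarith [h2, h3, h1]

lemma contr_diag_le_one {d : Fin n → ℝ} (h : ∀ i, |d i| ≤ 1) :
    Contr (diagonal d) := fun x => by
  simp only [mulVec_diagonal, dotProduct]
  refine Finset.sum_le_sum fun i _ => ?_
  have h1 : d i * d i ≤ 1 := abs_le_one_iff_mul_self_le_one.mp (h i)
  nlinarith [mul_self_nonneg (x i)]

lemma Contr.one : Contr (1 : Matrix (Fin n) (Fin n) ℝ) := fun x => by
  rw [one_mulVec]

lemma Contr.diag_abs_le_one {Y : Matrix (Fin n) (Fin n) ℝ} (hY : Contr Y) (i : Fin n) :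
    |Y i i| ≤ 1 := by
  have h := hY (Pi.single i 1)
  rw [abs_le]
  have hcol : (Y *ᵥ Pi.single i 1) = fun j => Y j i := by
    funext j; simp [mulVec_single]
  rw [hcol] at h
  have h1 : (Pi.single i 1 : Fin n → ℝ) ⬝ᵥ (Pi.single i 1) = 1 := by simp
  rw [h1] at h
  have h2 : Y i i * Y i i ≤ (fun j => Y j i) ⬝ᵥ (fun j => Y j i) := by
    unfold dotProduct
    exact Finset.single_le_sum (f := fun j => Y j i * Y j i)
      (fun j _ => mul_self_nonneg _) (Finset.mem_univ i)
  constructor <;> nlinarith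

lemma contr_list_prod (L : List (Matrix (Fin n) (Fin n) ℝ)) (h : ∀ M ∈ L, Contr M) :
    Contr L.prod := by
  induction L with
  | nil => simpa using Contr.one
  | cons a L ih =>
    rw [List.prod_cons]
    exact (h a (by simp)).mul (ih fun M hM => h M (by simp [hM]))

/-- split a product of contractions at position `l₀`. -/
lemma split_at {q : ℕ} (f : Fin q → Matrix (Fin n) (Fin n) ℝ) (hC : ∀ l, Contr (f l))
    (l₀ : Fin q) : ∃ X Z, Contr X ∧ Contr Z ∧ (List.ofFn f).prod = X * (f l₀ * Z) := by
  induction q with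
  | zero => exact l₀.elim0
  | succ q ih =>
    refine Fin.cases ?_ ?_ l₀
    · refine ⟨1, (List.ofFn fun i : Fin q => f i.succ).prod, Contr.one, ?_,
        by rw [List.ofFn_succ, List.prod_cons, one_mul]⟩
      refine contr_list_prod _ fun M hM => ?_
      rw [List.mem_ofFn] at hM
      obtain ⟨i, rfl⟩ := hM
      exact hC _
    · intro j
      obtain ⟨X, Z, h1, h2, h3⟩ := ih (fun i => f i.succ) (fun i => hC _) j
      exact ⟨f 0 * X, Z, (hC 0).mul h1, h2,
        by rw [List.ofFn_succ, List.prod_cons, h3, mul_assoc]⟩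

/-- cyclic rearrangement in a monoid. -/
lemma cyc {M : Type*} [Monoid M] (f g : ℕ → M) (q : ℕ) :
    (List.ofFn fun l : Fin q => f l * g l).prod * f q
      = f 0 * (List.ofFn fun l : Fin q => g l * f (l + 1)).prod := by
  induction q with
  | zero => simp
  | succ q ih =>
    rw [List.ofFn_succ' (fun l : Fin (q+1) => f l * g l), List.prod_concat,
        List.ofFn_succ' (fun l : Fin (q+1) => g l * f (l + 1)), List.prod_concat]
    simp only [Fin.coe_castSucc, Fin.val_last]
    have h2 : ((List.ofFn fun l : Fin q => f l * g l).prod * (f q * g q)) * f (q+1)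
        = ((List.ofFn fun l : Fin q => f l * g l).prod * f q) * (g q * f (q+1)) := by
      simp only [mul_assoc]
    rw [h2, ih, mul_assoc]

/-- multilinear expansion of a product of sums. -/
lemma expand {q : ℕ} (c : Fin q → Fin n → ℝ) (N : Fin q → Fin n → Matrix (Fin n) (Fin n) ℝ) :
    (List.ofFn fun l => ∑ k : Fin n, c l k • N l k).prod
      = ∑ k : Fin q → Fin n, (∏ l, c l (k l)) • (List.ofFn fun l => N l (k l)).prod := by
  induction q with
  | zero =>
    simp
  | succ q ih =>
    rw [List.ofFn_succ, List.prod_cons, ih (fun l => c l.succ) (fun l => N l.succ)]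
    rw [Finset.sum_mul_sum]
    rw [← (Fin.consEquiv (fun _ : Fin (q+1) => Fin n)).sum_comp]
    · rw [Fintype.sum_prod_type]
      refine Finset.sum_congr rfl fun k0 _ => Finset.sum_congr rfl fun k' _ => ?_
      rw [smul_mul_smul_comm]
      congr 1
      · rw [Fin.prod_univ_succ]
        simp [Fin.consEquiv]
      · rw [List.ofFn_succ]
        simp [Fin.consEquiv]

/-- the 0/1 diagonal projection onto coordinates `≤ c`. -/
def Pmat (c : Fin n) : Matrix (Fin n) (Fin n) ℝ :=
  diagonal fun i => if i ≤ c then (1 : ℝ) else 0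

section tele
variable (α : Fin n → ℝ)

/-- extend to ℕ by 0 -/
noncomputable def gee : ℕ → ℝ := fun k => if h : k < n then α ⟨k, h⟩ else 0

noncomputable def del : Fin n → ℝ := fun k => gee α k - gee α (k + 1)

lemma del_nonneg (h0 : ∀ i, 0 ≤ α i) (hmono : ∀ i j : Fin n, i ≤ j → α j ≤ α i) (k : Fin n) :
    0 ≤ del α k := by
  unfold del gee
  rw [dif_pos k.isLt]
  by_cases h : (k : ℕ) + 1 < n
  · rw [dif_pos h]
    have := hmono k ⟨k + 1, h⟩ (by simp [Fin.le_def])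
    simpa using sub_nonneg.mpr this
  · rw [dif_neg h]
    simpa using h0 k

lemma alpha_eq_sum_del (i : Fin n) :
    α i = ∑ k : Fin n, if i ≤ k then del α k else 0 := by
  have h1 : ∑ k : Fin n, (if i ≤ k then del α k else 0)
      = ∑ k ∈ Finset.range n, (if (i : ℕ) ≤ k then gee α k - gee α (k + 1) else 0) := by
    rw [← Fin.sum_univ_eq_sum_range (fun k => if (i : ℕ) ≤ k then gee α k - gee α (k + 1) else 0) n]
    refine Finset.sum_congr rfl fun k _ => ?_
    have hle : (i ≤ k) ↔ (i : ℕ) ≤ (k : ℕ) := Fin.le_def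
    have hg : gee α (k : ℕ) = α k := by unfold gee; rw [dif_pos k.isLt]
    simp only [hle, del, hg]
  rw [h1, ← Finset.sum_filter]
  have h2 : (Finset.range n).filter (fun k => (i : ℕ) ≤ k) = Finset.Ico (i : ℕ) n := by
    ext a
    simp [Finset.mem_Ico, Finset.mem_range, and_comm]
  rw [h2, Finset.sum_Ico_eq_sub _ (le_of_lt i.isLt), Finset.sum_range_sub' (gee α),
    Finset.sum_range_sub' (gee α)]
  have h3 : gee α n = 0 := by unfold gee; rw [dif_neg (lt_irrefl n)]
  have h4 : gee α i = α i := by unfold gee; rw [dif_pos i.isLt]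
  rw [h3, h4]
  ring

lemma diagonal_eq_sum_del :
    diagonal α = ∑ k : Fin n, del α k • Pmat k := by
  ext i j
  rw [Matrix.sum_apply]
  by_cases h : i = j
  · subst h
    simp only [diagonal_apply_eq, Pmat, Matrix.smul_apply, smul_eq_mul, mul_ite, mul_one, mul_zero]
    exact alpha_eq_sum_del α i
  · simp [diagonal_apply_ne _ h, Pmat, h]
end tele


lemma key_bound {q : ℕ} (hq : 0 < q) (k : Fin q → Fin n) (W : Fin q → Matrix (Fin n) (Fin n) ℝ)
    (hW : ∀ l, Contr (W l)) :
    |Matrix.trace (List.ofFn fun l => Pmat (k l) * W l).prod|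
      ≤ ((Finset.univ.filter fun i : Fin n => ∀ l, i ≤ k l).card : ℝ) := by
  obtain ⟨l₀, -, hmin⟩ := Finset.exists_min_image Finset.univ k ⟨⟨0, hq⟩, Finset.mem_univ _⟩
  have hPc : ∀ c : Fin n, Contr (Pmat c) := fun c => contr_diag_le_one fun i => by
    split <;> simp
  obtain ⟨X, Z, hX, hZ, hsplit⟩ := split_at (fun l => Pmat (k l) * W l)
    (fun l => (hPc _).mul (hW l)) l₀
  rw [hsplit, Matrix.trace_mul_comm]
  have hassoc : Pmat (k l₀) * W l₀ * Z * X = Pmat (k l₀) * (W l₀ * (Z * X)) := by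
    simp only [mul_assoc]
  rw [hassoc]
  set Y := W l₀ * (Z * X) with hY
  have hCY : Contr Y := (hW l₀).mul (hZ.mul hX)
  have htr : Matrix.trace (Pmat (k l₀) * Y)
      = ∑ i : Fin n, (if i ≤ k l₀ then (1:ℝ) else 0) * Y i i := by
    unfold Matrix.trace Pmat
    refine Finset.sum_congr rfl fun i _ => ?_
    rw [Matrix.diag_apply, Matrix.diagonal_mul]
  rw [htr]
  have hcard : (Finset.univ.filter fun i : Fin n => ∀ l, i ≤ k l)
      = (Finset.univ.filter fun i : Fin n => i ≤ k l₀) := by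
    refine Finset.filter_congr fun i _ => ?_
    constructor
    · exact fun h => h l₀
    · exact fun h l => le_trans h (hmin l (Finset.mem_univ _))
  rw [hcard]
  calc |∑ i : Fin n, (if i ≤ k l₀ then (1:ℝ) else 0) * Y i i|
      ≤ ∑ i : Fin n, |(if i ≤ k l₀ then (1:ℝ) else 0) * Y i i| :=
        Finset.abs_sum_le_sum_abs _ _
    _ ≤ ∑ i : Fin n, (if i ≤ k l₀ then (1:ℝ) else 0) := by
        refine Finset.sum_le_sum fun i _ => ?_
        rw [abs_mul]
        split
        · simpa using hCY.diag_abs_le_one i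
        · simp
    _ = ((Finset.univ.filter fun i : Fin n => i ≤ k l₀).card : ℝ) := by
        rw [Finset.sum_boole]

lemma svd_decomp (A : Matrix (Fin n) (Fin n) ℝ) (α : Fin n → ℝ)
    (hH : (A * Aᵀ).IsHermitian)
    (he : ∃ e : Equiv.Perm (Fin n), ∀ i, α i ^ 2 = hH.eigenvalues (e i)) :
    ∃ U V : Matrix (Fin n) (Fin n) ℝ,
      Uᵀ * U = 1 ∧ U * Uᵀ = 1 ∧ Contr V ∧ A = U * diagonal α * V := by
  obtain ⟨e, he⟩ := he
  set S : Matrix (Fin n) (Fin n) ℝ := (hH.eigenvectorUnitary : Matrix (Fin n) (Fin n) ℝ) with hSdef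
  have hspec : A * Aᵀ = S * diagonal hH.eigenvalues * Sᵀ := by
    have h := hH.spectral_theorem
    convert h using 2
    rw [Unitary.conjStarAlgAut_apply, star_eq_conjTranspose, conjTranspose_eq_transpose_of_trivial]
    simp [S, Function.comp_def]
  have hS1 : Sᵀ * S = 1 := by
    have := (Matrix.mem_unitaryGroup_iff').mp hH.eigenvectorUnitary.2
    rw [Matrix.star_eq_conjTranspose] at this
    convert this using 2
    exact (conjTranspose_eq_transpose_of_trivial _).symm
  have hS2 : S * Sᵀ = 1 := by
    have := (Matrix.mem_unitaryGroup_iff).mp hH.eigenvectorUnitary.2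
    rw [Matrix.star_eq_conjTranspose] at this
    convert this using 2
    exact (conjTranspose_eq_transpose_of_trivial _).symm
  set U : Matrix (Fin n) (Fin n) ℝ := S.submatrix id e with hUdef
  have hUt : Uᵀ = Sᵀ.submatrix e id := by
    rw [hUdef, Matrix.transpose_submatrix]
  have hU1 : Uᵀ * U = 1 := by
    rw [hUt, hUdef]
    rw [← Matrix.submatrix_mul Sᵀ S e id e Function.bijective_id, hS1,
      Matrix.submatrix_one_equiv e]
  have hU2 : U * Uᵀ = 1 := by
    rw [hUt, hUdef, ← Matrix.submatrix_mul S Sᵀ id e id e.bijective, hS2]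
    rfl
  have hdiagU : Uᵀ * (A * Aᵀ) * U = diagonal fun i => α i ^ 2 := by
    rw [hspec, hUt, hUdef]
    have h1 : Sᵀ * (S * diagonal hH.eigenvalues * Sᵀ) * S = diagonal hH.eigenvalues := by
      rw [← mul_assoc, ← mul_assoc, hS1, one_mul, mul_assoc, hS1, mul_one]
    have h2 : Sᵀ.submatrix (⇑e) id * (S * diagonal hH.eigenvalues * Sᵀ * S.submatrix id ⇑e)
        = (Sᵀ * (S * diagonal hH.eigenvalues * Sᵀ) * S).submatrix (⇑e) (⇑e) := by
      rw [Matrix.submatrix_mul (Sᵀ * (S * diagonal hH.eigenvalues * Sᵀ)) S e id e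
        Function.bijective_id]
      rw [Matrix.submatrix_mul Sᵀ (S * diagonal hH.eigenvalues * Sᵀ) e id id
        Function.bijective_id]
      rw [Matrix.submatrix_id_id]
      simp only [mul_assoc]
    rw [mul_assoc, h2, h1, Matrix.submatrix_diagonal_equiv]
    have h3 : (hH.eigenvalues ∘ ⇑e) = fun i => α i ^ 2 := funext fun i => (he i).symm
    rw [h3]
  set B : Matrix (Fin n) (Fin n) ℝ := Uᵀ * A with hBdef
  have hBB : B * Bᵀ = diagonal fun i => α i ^ 2 := by
    rw [hBdef, Matrix.transpose_mul, Matrix.transpose_transpose, ← hdiagU]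
    simp only [mul_assoc]
  set V : Matrix (Fin n) (Fin n) ℝ := diagonal (fun i => (α i)⁻¹) * B with hVdef
  have hVtV : Vᵀ * V = Bᵀ * (diagonal fun i => ((α i)^2)⁻¹) * B := by
    rw [hVdef, Matrix.transpose_mul, Matrix.diagonal_transpose]
    rw [show ∀ (X Y Z W : Matrix (Fin n) (Fin n) ℝ), X * Y * (Z * W) = X * (Y * Z) * W from
      fun X Y Z W => by simp only [mul_assoc], Matrix.diagonal_mul_diagonal]
    have h4 : (fun i => (α i)⁻¹ * (α i)⁻¹) = fun i => ((α i)^2)⁻¹ := by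
      funext i; rw [sq, mul_inv]
    rw [h4]
  have hContrV : Contr V := by
    apply contr_of_idem
    rw [hVtV]
    have : Bᵀ * (diagonal fun i => ((α i)^2)⁻¹) * B * (Bᵀ * (diagonal fun i => ((α i)^2)⁻¹) * B)
        = Bᵀ * ((diagonal fun i => ((α i)^2)⁻¹) * (B * Bᵀ) * (diagonal fun i => ((α i)^2)⁻¹)) * B := by
      simp only [mul_assoc]
    rw [this, hBB, Matrix.diagonal_mul_diagonal, Matrix.diagonal_mul_diagonal]
    have h5 : (fun i => (α i ^ 2)⁻¹ * α i ^ 2 * (α i ^ 2)⁻¹) = fun i => (α i ^ 2)⁻¹ := by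
      funext i
      by_cases h : α i = 0
      · rw [h]; norm_num
      · field_simp
    rw [h5]
  refine ⟨U, V, hU1, hU2, hContrV, ?_⟩
  have hzero : ∀ i, α i = 0 → ∀ j, B i j = 0 := by
    intro i hi j
    have hBi : (B * Bᵀ) i i = ∑ j, B i j ^ 2 := by
      rw [Matrix.mul_apply]
      refine Finset.sum_congr rfl fun j _ => ?_
      rw [Matrix.transpose_apply, sq]
    rw [hBB, Matrix.diagonal_apply_eq, hi] at hBi
    have h0 : ∑ j, B i j ^ 2 = 0 := by rw [← hBi]; ring
    have := (Finset.sum_eq_zero_iff_of_nonneg (fun j _ => sq_nonneg (B i j))).mp h0 j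
      (Finset.mem_univ j)
    exact pow_eq_zero_iff (n := 2) (by norm_num) |>.mp this
  have hDV : diagonal α * V = B := by
    rw [hVdef, ← mul_assoc, Matrix.diagonal_mul_diagonal]
    ext i j
    rw [Matrix.diagonal_mul]
    by_cases h : α i = 0
    · rw [hzero i h j, mul_zero]
    · rw [mul_inv_cancel₀ h, one_mul]
  rw [mul_assoc, hDV, hBdef, ← mul_assoc, hU2, one_mul]


/-- Kristof's trace inequality: if `α l` lists the singular values of `A l`
(in decreasing order), i.e. the `(α l i)²` enumerate the eigenvalues of
`A l * (A l)ᵀ`, then `|tr (A 1 ⋯ A q)| ≤ ∑ i, ∏ l, α l i`. -/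
theorem kristof_trace_inequality (n q : ℕ) (hn : 2 ≤ n)
    (A : Fin q → Matrix (Fin n) (Fin n) ℝ) (α : Fin q → Fin n → ℝ)
    (hHerm : ∀ l, (A l * (A l)ᵀ).IsHermitian)
    (hnonneg : ∀ l i, 0 ≤ α l i)
    (hmono : ∀ l, ∀ i j : Fin n, i ≤ j → α l j ≤ α l i)
    (heig : ∀ l, ∃ e : Equiv.Perm (Fin n),
      ∀ i, (α l i) ^ 2 = (hHerm l).eigenvalues (e i)) :
    |Matrix.trace (List.ofFn A).prod| ≤ ∑ i, ∏ l, α l i := by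
  rcases Nat.eq_zero_or_pos q with hq | hq
  · subst hq
    simp [Matrix.trace_one]
  -- SVD decompositions
  choose U V hU1 hU2 hV hA using fun l => svd_decomp (A l) (α l) (hHerm l) (heig l)
  set D : Fin q → Matrix (Fin n) (Fin n) ℝ := fun l => diagonal (α l) with hD
  set Unat : ℕ → Matrix (Fin n) (Fin n) ℝ :=
    fun m => U ⟨m % q, Nat.mod_lt m hq⟩ with hUnat
  set gnat : ℕ → Matrix (Fin n) (Fin n) ℝ :=
    fun m => D ⟨m % q, Nat.mod_lt m hq⟩ * V ⟨m % q, Nat.mod_lt m hq⟩ with hgnat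
  set W : Fin q → Matrix (Fin n) (Fin n) ℝ :=
    fun l => V l * Unat ((l : ℕ) + 1) with hW
  have hmod : ∀ l : Fin q, (⟨(l : ℕ) % q, Nat.mod_lt _ hq⟩ : Fin q) = l := by
    intro l
    ext
    simp [Nat.mod_eq_of_lt l.isLt]
  have hContrW : ∀ l, Contr (W l) :=
    fun l => (hV l).mul (contr_of_orth (hU1 _))
  -- cyclic shift of the product
  have hlist1 : (List.ofFn A) = List.ofFn (fun l : Fin q => Unat l * gnat l) := by
    congr 1
    funext l
    rw [hUnat, hgnat]
    dsimp only
    rw [hmod l, hA l, hD, mul_assoc]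
  have hlist2 : (List.ofFn fun l : Fin q => gnat l * Unat ((l : ℕ) + 1))
      = List.ofFn (fun l : Fin q => D l * W l) := by
    congr 1
    funext l
    rw [hgnat, hW]
    dsimp only
    rw [hmod l, mul_assoc]
  have hcyc := cyc Unat gnat q
  rw [hlist2] at hcyc
  set U0 : Matrix (Fin n) (Fin n) ℝ := U ⟨0, hq⟩ with hU0
  have hUq : Unat q = U0 := by
    rw [hUnat]
    dsimp only
    have h : (⟨q % q, Nat.mod_lt q hq⟩ : Fin q) = ⟨0, hq⟩ := by
      ext; simp [Nat.mod_self]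
    rw [h]
  have hUz : Unat 0 = U0 := by
    rw [hUnat]
    dsimp only
    have h : (⟨0 % q, Nat.mod_lt 0 hq⟩ : Fin q) = ⟨0, hq⟩ := by
      ext; simp
    rw [h]
  rw [hUq, hUz, ← hlist1] at hcyc
  -- trace identity
  have htrace : Matrix.trace (List.ofFn A).prod
      = Matrix.trace (List.ofFn fun l : Fin q => D l * W l).prod := by
    have h1 : Matrix.trace (List.ofFn A).prod
        = Matrix.trace ((List.ofFn A).prod * U0 * U0ᵀ) := by
      rw [mul_assoc, hU2, mul_one]
    rw [h1, hcyc, Matrix.trace_mul_comm, ← mul_assoc, hU1 ⟨0, hq⟩, one_mul]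
  rw [htrace]
  -- expand multilinearly
  have hitem : ∀ l : Fin q, D l * W l
      = ∑ k : Fin n, del (α l) k • (Pmat k * W l) := by
    intro l
    rw [hD]
    dsimp only
    rw [diagonal_eq_sum_del (α l), Finset.sum_mul]
    exact Finset.sum_congr rfl fun k _ => smul_mul_assoc _ _ _
  have hexp : (List.ofFn fun l : Fin q => D l * W l).prod
      = ∑ k : Fin q → Fin n, (∏ l, del (α l) (k l)) •
          (List.ofFn fun l => Pmat (k l) * W l).prod := by
    rw [show (List.ofFn fun l : Fin q => D l * W l)
        = List.ofFn fun l : Fin q => ∑ k : Fin n, del (α l) k • (Pmat k * W l) from by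
      congr 1; funext l; exact hitem l]
    exact expand _ _
  rw [hexp, Matrix.trace_sum]
  have hdelnn : ∀ (l : Fin q) (k : Fin n), 0 ≤ del (α l) k :=
    fun l k => del_nonneg (α l) (hnonneg l) (hmono l) k
  -- RHS rewriting
  have hRHS : ∑ i, ∏ l, α l i
      = ∑ k : Fin q → Fin n, (∏ l, del (α l) (k l)) *
          ((Finset.univ.filter fun i : Fin n => ∀ l, i ≤ k l).card : ℝ) := by
    have h1 : ∀ i : Fin n, ∏ l, α l i
        = ∑ k : Fin q → Fin n, ∏ l, (if i ≤ k l then del (α l) (k l) else 0) := by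
      intro i
      rw [show (fun l => α l i) = fun l => ∑ j : Fin n, if i ≤ j then del (α l) j else 0 from
        funext fun l => alpha_eq_sum_del (α l) i]
      exact Fintype.prod_sum _
    rw [Finset.sum_congr rfl fun i _ => h1 i, Finset.sum_comm]
    refine Finset.sum_congr rfl fun k _ => ?_
    have h2 : ∑ i : Fin n, (∏ l, if i ≤ k l then del (α l) (k l) else 0)
        = ∑ _i ∈ Finset.univ.filter (fun i : Fin n => ∀ l, i ≤ k l), ∏ l, del (α l) (k l) := by
      rw [Finset.sum_filter]
      refine Finset.sum_congr rfl fun i _ => ?_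
      by_cases h : ∀ l, i ≤ k l
      · rw [if_pos h]
        exact Finset.prod_congr rfl fun l _ => if_pos (h l)
      · rw [if_neg h]
        push_neg at h
        obtain ⟨l, hl⟩ := h
        exact Finset.prod_eq_zero (Finset.mem_univ l) (if_neg (not_le.mpr hl))
    rw [h2, Finset.sum_const, nsmul_eq_mul, mul_comm]
  rw [hRHS]
  calc |∑ k : Fin q → Fin n, Matrix.trace ((∏ l, del (α l) (k l)) •
          (List.ofFn fun l => Pmat (k l) * W l).prod)|
      ≤ ∑ k : Fin q → Fin n, |Matrix.trace ((∏ l, del (α l) (k l)) •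
          (List.ofFn fun l => Pmat (k l) * W l).prod)| := Finset.abs_sum_le_sum_abs _ _
    _ ≤ ∑ k : Fin q → Fin n, (∏ l, del (α l) (k l)) *
          ((Finset.univ.filter fun i : Fin n => ∀ l, i ≤ k l).card : ℝ) := by
        refine Finset.sum_le_sum fun k _ => ?_
        rw [Matrix.trace_smul, smul_eq_mul, abs_mul,
          abs_of_nonneg (Finset.prod_nonneg fun l _ => hdelnn l (k l))]
        exact mul_le_mul_of_nonneg_left (key_bound hq k W hContrW)
          (Finset.prod_nonneg fun l _ => hdelnn l (k l))
end

section
/- Let U_1, …, U_n be i.i.d. real random variables with E[U_1] = 0 and Var(U_1) = σ² < ∞, and let p = p(n) with p/n → 0. Let U_{<1>}² ≥ … ≥ U_{<n>}² be the decreasingly ordered values of U_1², …, U_n². Then (1/n) ∑_{i=1}^p U_{<i>}² → 0 in probability as n → ∞. -/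
open Finset Filter MeasureTheory ProbabilityTheory

/-- The sum of the `p` largest among `U 0 ^2, …, U (n-1) ^2`: the maximum over all
`p`-element subsets of `{0, …, n-1}` of the corresponding sum of squares. -/
noncomputable def topPSumSq {Ω : Type*} (U : ℕ → Ω → ℝ) (n p : ℕ) (hpn : p ≤ n)
    (ω : Ω) : ℝ :=
  ((Finset.range n).powersetCard p).sup'
    (Finset.powersetCard_nonempty.2 (by simpa using hpn))
    (fun s => ∑ i ∈ s, (U i ω) ^ 2)

/-- Truncated tail of the square: `x² 1(x² > M)`. -/
noncomputable def trTail (M : ℕ) (x : ℝ) : ℝ := if (M : ℝ) < x ^ 2 then x ^ 2 else 0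

lemma trTail_measurable (M : ℕ) : Measurable (trTail M) := by
  unfold trTail
  exact Measurable.ite (measurableSet_lt measurable_const (measurable_id.pow_const 2))
    (measurable_id.pow_const 2) measurable_const

lemma trTail_nonneg (M : ℕ) (x : ℝ) : 0 ≤ trTail M x := by
  unfold trTail; split
  · exact sq_nonneg x
  · exact le_rfl

lemma trTail_le_sq (M : ℕ) (x : ℝ) : trTail M x ≤ x ^ 2 := by
  unfold trTail; split
  · exact le_rfl
  · exact sq_nonneg x

lemma sq_le_add_trTail (M : ℕ) (x : ℝ) : x ^ 2 ≤ (M : ℝ) + trTail M x := by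
  unfold trTail; split
  · simpa using (M.cast_nonneg : (0:ℝ) ≤ M)
  · next h => push_neg at h; simpa using h

lemma topPSumSq_nonneg {Ω : Type*} (U : ℕ → Ω → ℝ) (n p : ℕ) (hpn : p ≤ n) (ω : Ω) :
    0 ≤ topPSumSq U n p hpn ω := by
  obtain ⟨s, hs⟩ := (Finset.powersetCard_nonempty.2 (by simpa using hpn) :
      ((range n).powersetCard p).Nonempty)
  exact le_trans (Finset.sum_nonneg fun i _ => sq_nonneg _)
    (Finset.le_sup' (fun s => ∑ i ∈ s, (U i ω) ^ 2) hs)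

/-- For i.i.d. centered `U i` with finite variance and `p n / n → 0`, the average
of the `p n` largest squares, `(1/n) ∑_{i ≤ p n} U_{<i>}²`, tends to `0` in
probability. -/
theorem top_order_stats_small {Ω : Type*} [MeasurableSpace Ω] (μ : Measure Ω)
    [IsProbabilityMeasure μ] (U : ℕ → Ω → ℝ)
    (hindep : iIndepFun U μ)
    (hident : ∀ i, IdentDistrib (U i) (U 0) μ μ)
    (hmom : MemLp (U 0) 2 μ)
    (hmean : ∫ ω, U 0 ω ∂μ = 0)
    (p : ℕ → ℕ) (hpn : ∀ n, p n ≤ n)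
    (hp : Tendsto (fun n : ℕ => (p n : ℝ) / n) atTop (nhds 0)) :
    TendstoInMeasure μ
      (fun n ω => topPSumSq U n (p n) (hpn n) ω / n) atTop (fun _ => (0 : ℝ)) := by
  have hUsq : Integrable (fun ω => U 0 ω ^ 2) μ := hmom.integrable_sq
  have hU : ∀ i, AEMeasurable (U i) μ := fun i => (hident i).aemeasurable_fst
  -- the truncated tail expectation tends to zero
  have htail : Tendsto (fun M : ℕ => ∫ ω, trTail M (U 0 ω) ∂μ) atTop (nhds 0) := by
    have h0 : (0 : ℝ) = ∫ _ : Ω, (0 : ℝ) ∂μ := by simp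
    rw [h0]
    apply tendsto_integral_of_dominated_convergence (fun ω => U 0 ω ^ 2)
    · exact fun M => ((trTail_measurable M).comp_aemeasurable (hU 0)).aestronglyMeasurable
    · exact hUsq
    · intro M
      filter_upwards with ω
      rw [Real.norm_eq_abs, abs_of_nonneg (trTail_nonneg M _)]
      exact trTail_le_sq M _
    · filter_upwards with ω
      have hev : ∀ᶠ M : ℕ in atTop, trTail M (U 0 ω) = 0 := by
        filter_upwards [eventually_ge_atTop ⌈U 0 ω ^ 2⌉₊] with M hM
        unfold trTail
        rw [if_neg]
        push_neg
        exact le_trans (Nat.le_ceil _) (by exact_mod_cast hM)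
      exact Tendsto.congr' (hev.mono fun M h => h.symm) tendsto_const_nhds
  rw [tendstoInMeasure_iff_dist]
  intro ε hε
  obtain ⟨M, hM⟩ : ∃ M : ℕ, ∫ ω, trTail M (U 0 ω) ∂μ < ε / 4 :=
    (htail.eventually_lt_const (by positivity : (0:ℝ) < ε / 4)).exists
  set Y : ℕ → Ω → ℝ := fun i ω => trTail M (U i ω) with hY
  have hYmeas : ∀ i, AEStronglyMeasurable (Y i) μ :=
    fun i => ((trTail_measurable M).comp_aemeasurable (hU i)).aestronglyMeasurable
  have hYint : Integrable (Y 0) μ := by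
    apply hUsq.mono (hYmeas 0)
    filter_upwards with ω
    rw [Real.norm_eq_abs, Real.norm_eq_abs, abs_of_nonneg (trTail_nonneg M _),
      abs_of_nonneg (sq_nonneg _)]
    exact trTail_le_sq M _
  have hYindep : Pairwise (Function.onFun (IndepFun · · μ) Y) := by
    intro i j hij
    exact (hindep.indepFun hij).comp (trTail_measurable M) (trTail_measurable M)
  have hYident : ∀ i, IdentDistrib (Y i) (Y 0) μ μ :=
    fun i => (hident i).comp (trTail_measurable M)
  have hslln := strong_law_ae_real Y hYint hYindep hYident
  have hAim : TendstoInMeasure μ (fun n ω => (∑ i ∈ range n, Y i ω) / n) atTop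
      (fun _ => ∫ ω, Y 0 ω ∂μ) :=
    tendstoInMeasure_of_tendsto_ae
      (fun n => (((Finset.aemeasurable_fun_sum (range n) fun i _ =>
        (trTail_measurable M).comp_aemeasurable (hU i)).div_const
        (n : ℝ))).aestronglyMeasurable)
      hslln
  have hA := tendstoInMeasure_iff_dist.mp hAim (ε / 4) (by positivity)
  have hPM : ∀ᶠ n : ℕ in atTop, (p n : ℝ) / n * M ≤ ε / 4 := by
    have := hp.mul_const (M : ℝ)
    rw [zero_mul] at this
    exact (this.eventually_lt_const (by positivity : (0:ℝ) < ε / 4)).mono fun n h => h.le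
  refine tendsto_of_tendsto_of_tendsto_of_le_of_le' tendsto_const_nhds hA
    (Eventually.of_forall fun n => zero_le) ?_
  filter_upwards [hPM, eventually_ge_atTop 1] with n hnM hn1
  apply measure_mono
  intro ω hω
  simp only [Set.mem_setOf_eq] at hω ⊢
  by_contra hcon
  push_neg at hcon
  rw [Real.dist_eq] at hcon
  have hA' : (∑ i ∈ range n, Y i ω) / n < ε / 2 := by
    have h1 : (∑ i ∈ range n, Y i ω) / n - ∫ ω, Y 0 ω ∂μ < ε / 4 :=
      lt_of_le_of_lt (le_abs_self _) hcon
    linarith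
  have hn0 : (0 : ℝ) < n := by exact_mod_cast hn1
  have hkey : topPSumSq U n (p n) (hpn n) ω ≤ (p n : ℝ) * M + ∑ i ∈ range n, Y i ω := by
    apply Finset.sup'_le
    intro s hs
    rw [Finset.mem_powersetCard] at hs
    calc ∑ i ∈ s, U i ω ^ 2 ≤ ∑ i ∈ s, ((M : ℝ) + Y i ω) :=
          Finset.sum_le_sum fun i _ => sq_le_add_trTail M _
      _ = (s.card : ℝ) * M + ∑ i ∈ s, Y i ω := by
          rw [Finset.sum_add_distrib, Finset.sum_const, nsmul_eq_mul]
      _ ≤ (p n : ℝ) * M + ∑ i ∈ range n, Y i ω := by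
          refine add_le_add (by rw [hs.2]) ?_
          exact Finset.sum_le_sum_of_subset_of_nonneg hs.1
            fun i _ _ => trTail_nonneg M _
  have hdiv : topPSumSq U n (p n) (hpn n) ω / n
      ≤ (p n : ℝ) / n * M + (∑ i ∈ range n, Y i ω) / n := by
    rw [div_mul_eq_mul_div, ← add_div]
    gcongr
  have hfnn : 0 ≤ topPSumSq U n (p n) (hpn n) ω / n :=
    div_nonneg (topPSumSq_nonneg U n (p n) (hpn n) ω) hn0.le
  rw [Real.dist_eq, sub_zero, abs_of_nonneg hfnn] at hω
  linarith
end

section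
/- Let P = I − (1/n)𝟙𝟙ᵀ, H a symmetric projection matrix with range contained in the range of P, and M := P − H + P·diag(H), where diag(H) is the diagonal matrix of leverage scores. Then the diagonal entries of B := MᵀM satisfy B_ii = 1 − 1/n + (1 − 2/n)H_ii − (1 + 1/n)H_ii², and consequently B_ii − Q_ii = 1 + O(n^{-1}) uniformly in i, where Q_ii := H_ii − H_ii². -/
open Finset Matrix

/-- Diagonal entries of `B = MᵀM` with `M = P − H + P·diag(H)`,
`P = I − (1/n)𝟙𝟙ᵀ`: explicit formula and uniform `1 + O(n⁻¹)` comparison with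
`Q_ii = H_ii − H_ii²`. -/
theorem diag_B_formula (n : ℕ) (H : Matrix (Fin n) (Fin n) ℝ)
    (hsymm : H.IsSymm) (hidem : H * H = H)
    (hH1 : H.mulVec (fun _ => (1 : ℝ)) = 0) :
    let P : Matrix (Fin n) (Fin n) ℝ := 1 - (n : ℝ)⁻¹ • Matrix.of fun _ _ => (1 : ℝ)
    let M : Matrix (Fin n) (Fin n) ℝ := P - H + P * Matrix.diagonal (fun i => H i i)
    let B : Matrix (Fin n) (Fin n) ℝ := Mᵀ * M
    (∀ i, B i i
        = 1 - 1 / (n : ℝ) + (1 - 2 / (n : ℝ)) * H i i - (1 + 1 / (n : ℝ)) * (H i i) ^ 2) ∧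
    (∀ i, |B i i - (H i i - (H i i) ^ 2) - 1| ≤ 4 / (n : ℝ)) := by
  intro P M B
  have hsym' : ∀ i j, H j i = H i j := fun i j => by
    have := congrFun (congrFun hsymm i) j
    simpa [Matrix.transpose_apply] using this
  have hrow : ∀ i : Fin n, ∑ j, H i j = 0 := fun i => by
    have := congrFun hH1 i
    simpa [Matrix.mulVec, dotProduct] using this
  have hcol : ∀ i : Fin n, ∑ j, H j i = 0 := fun i => by
    simpa [hsym'] using hrow i
  have hsq : ∀ i : Fin n, ∑ j, H j i * H j i = H i i := fun i => by
    have := congrFun (congrFun hidem i) i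
    rw [Matrix.mul_apply] at this
    calc ∑ j, H j i * H j i = ∑ j, H i j * H j i := by
          refine Finset.sum_congr rfl fun j _ => by rw [hsym']
      _ = H i i := this
  have hnpos : ∀ _ : Fin n, (0:ℝ) < n := fun i => by
    exact_mod_cast i.pos
  set c : ℝ := (n : ℝ)⁻¹ with hc
  have hM : ∀ i j : Fin n, M j i
      = ((if j = i then (1:ℝ) else 0) - c) * (1 + H i i) - H j i := by
    intro i j
    simp only [M, P, Matrix.add_apply, Matrix.sub_apply, Matrix.mul_diagonal,
      Matrix.one_apply, Matrix.smul_apply, Matrix.of_apply, smul_eq_mul]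
    ring
  have key : ∀ i, B i i
      = 1 - 1 / (n : ℝ) + (1 - 2 / (n : ℝ)) * H i i - (1 + 1 / (n : ℝ)) * (H i i) ^ 2 := by
    intro i
    have hn : (0:ℝ) < n := hnpos i
    have hBi : B i i = ∑ j, M j i * M j i := by
      simp [B, Matrix.mul_apply, Matrix.transpose_apply]
    have expand : B i i = ∑ j,
        ((1 + H i i)^2 * ((if j = i then (1:ℝ) else 0) - 2*c*(if j = i then (1:ℝ) else 0) + c^2)
          - 2*(1 + H i i)*((if j = i then (1:ℝ) else 0)*H j i)
          + 2*(1 + H i i)*c*H j i + H j i * H j i) := by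
      rw [hBi]
      refine Finset.sum_congr rfl fun j _ => ?_
      rw [hM i j]
      by_cases hj : j = i <;> simp [hj] <;> ring
    rw [expand]
    have hsplit : ∑ j,
        ((1 + H i i)^2 * ((if j = i then (1:ℝ) else 0) - 2*c*(if j = i then (1:ℝ) else 0) + c^2)
          - 2*(1 + H i i)*((if j = i then (1:ℝ) else 0)*H j i)
          + 2*(1 + H i i)*c*H j i + H j i * H j i)
        = (1 + H i i)^2 * (1 - 2*c + n*c^2)
          - 2*(1 + H i i)*H i i + 2*(1 + H i i)*c*0 + H i i := by
      rw [Finset.sum_add_distrib, Finset.sum_add_distrib, Finset.sum_sub_distrib,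
        ← Finset.mul_sum, ← Finset.mul_sum, ← Finset.mul_sum, hsq, hcol,
        Finset.sum_add_distrib, Finset.sum_sub_distrib, ← Finset.mul_sum]
      simp [Finset.sum_ite_eq', Finset.mul_sum, mul_comm]
    rw [hsplit]
    have h1 : (n:ℝ) * c^2 = c := by
      rw [hc, sq, ← mul_assoc, mul_inv_cancel₀ hn.ne', one_mul]
    rw [h1]
    have h2 : c = 1 / (n:ℝ) := by rw [hc, one_div]
    rw [h2]
    field_simp
    ring
  refine ⟨key, fun i => ?_⟩
  have hn : (0:ℝ) < n := hnpos i
  have hc' : c = 1 / (n:ℝ) := by rw [hc, one_div]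
  -- 0 ≤ H i i ≤ 1
  have hge : 0 ≤ H i i := by
    rw [← hsq i]
    exact Finset.sum_nonneg fun j _ => mul_self_nonneg _
  have hsqle : H i i * H i i ≤ H i i := by
    conv_rhs => rw [← hsq i]
    exact Finset.single_le_sum (fun j _ => mul_self_nonneg (H j i)) (Finset.mem_univ i)
  have hle : H i i ≤ 1 := by nlinarith
  have hE : 1 - 1/(n:ℝ) + (1 - 2/(n:ℝ))*H i i - (1+1/(n:ℝ))*(H i i)^2
      - (H i i - (H i i)^2) - 1 = -((1 + 2*H i i + (H i i)^2)/(n:ℝ)) := by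
    field_simp
    ring
  rw [key i, hE, abs_neg, abs_div, abs_of_nonneg (by nlinarith), abs_of_pos hn]
  gcongr
  nlinarith
end

section
/- Let H ∈ ℝ^{n×n} be symmetric idempotent with rank p and H𝟙 = 0, and let y(1), y(0) ∈ ℝⁿ. Suppose r_1 ∈ (0,1), r_0 = 1 − r_1. Define σ²_{hd,q} := (r_1 r_0)²/(n−1) · [∑_{i≠j} H_ij² u_i u_j + ∑_i (H_ii − H_ii²) u_i²], where u_i := (y_i(1) − ȳ(1))/r_1² − (y_i(0) − ȳ(0))/r_0². Then 0 ≤ σ²_{hd,q} ≤ 2(r_1 r_0)²/(n−1) · ∑_i (H_ii − H_ii²) u_i². -/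
open Finset Matrix

/-- Empirical mean of a finite population. -/
noncomputable def popMean (n : ℕ) (a : Fin n → ℝ) : ℝ := (∑ i, a i) / n

/-- Bounds on the quadratic-part variance
`σ²_{hd,q} = (r₁r₀)²/(n−1) [∑_{i≠j} H_ij² u_i u_j + ∑_i (H_ii − H_ii²) u_i²]`
with `u_i = (y_i(1) − ȳ(1))/r₁² − (y_i(0) − ȳ(0))/r₀²`:
`0 ≤ σ²_{hd,q} ≤ 2(r₁r₀)²/(n−1) ∑_i (H_ii − H_ii²) u_i²`. -/
theorem sigma_hd_q_bounds (n p : ℕ) (hn : 2 ≤ n) (H : Matrix (Fin n) (Fin n) ℝ)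
    (hsymm : H.IsSymm) (hidem : H * H = H) (htr : H.trace = p)
    (hH1 : H.mulVec (fun _ => (1 : ℝ)) = 0)
    (r1 r0 : ℝ) (hr1 : r1 ∈ Set.Ioo (0:ℝ) 1) (hr0 : r0 = 1 - r1)
    (y1 y0 u : Fin n → ℝ)
    (hu : ∀ i, u i = (y1 i - popMean n y1) / r1 ^ 2 - (y0 i - popMean n y0) / r0 ^ 2) :
    0 ≤ (r1 * r0) ^ 2 / (n - 1) *
        ((∑ i, ∑ j ∈ Finset.univ.erase i, (H i j) ^ 2 * u i * u j)
          + ∑ i, (H i i - (H i i) ^ 2) * (u i) ^ 2) ∧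
    (r1 * r0) ^ 2 / (n - 1) *
        ((∑ i, ∑ j ∈ Finset.univ.erase i, (H i j) ^ 2 * u i * u j)
          + ∑ i, (H i i - (H i i) ^ 2) * (u i) ^ 2)
      ≤ 2 * (r1 * r0) ^ 2 / (n - 1) * ∑ i, (H i i - (H i i) ^ 2) * (u i) ^ 2 := by
  have hsym' : ∀ i j, H j i = H i j := fun i j => hsymm.apply i j
  -- row sum identity
  have hrow : ∀ i, ∑ j ∈ Finset.univ.erase i, (H i j) ^ 2 = H i i - (H i i) ^ 2 := by
    intro i
    have h1 : ∑ j, H i j * H j i = H i i := by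
      have := congrFun (congrFun hidem i) i
      simpa [Matrix.mul_apply] using this
    have h2 : ∑ j, (H i j) ^ 2 = H i i := by
      rw [← h1]
      refine Finset.sum_congr rfl fun j _ => ?_
      rw [hsym' i j]; ring
    have h3 := Finset.sum_erase_add Finset.univ (fun j => (H i j) ^ 2) (Finset.mem_univ i)
    rw [h2] at h3
    linarith
  set S := ∑ i, ∑ j ∈ Finset.univ.erase i, (H i j) ^ 2 * u i * u j with hS
  set D := ∑ i, (H i i - (H i i) ^ 2) * (u i) ^ 2 with hD
  have hDexp : D = ∑ i, ∑ j ∈ Finset.univ.erase i, (H i j) ^ 2 * (u i) ^ 2 := by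
    rw [hD]
    refine Finset.sum_congr rfl fun i _ => ?_
    rw [← hrow i, Finset.sum_mul]
  -- swap lemma
  have hswap : ∀ f : Fin n → Fin n → ℝ,
      ∑ i, ∑ j ∈ Finset.univ.erase i, f i j = ∑ j, ∑ i ∈ Finset.univ.erase j, f i j := by
    intro f
    refine Finset.sum_comm' ?_
    intro i j
    simp [Finset.mem_erase, eq_comm, and_comm]
  have hDexp2 : D = ∑ i, ∑ j ∈ Finset.univ.erase i, (H i j) ^ 2 * (u j) ^ 2 := by
    rw [hswap (fun i j => (H i j) ^ 2 * (u j) ^ 2), hDexp]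
    refine Finset.sum_congr rfl fun j _ => Finset.sum_congr rfl fun i _ => ?_
    rw [hsym' j i]
  have hDD : D + D = ∑ i, ∑ j ∈ Finset.univ.erase i,
      ((H i j) ^ 2 * (u i) ^ 2 + (H i j) ^ 2 * (u j) ^ 2) := by
    nth_rewrite 1 [hDexp]
    rw [hDexp2, ← Finset.sum_add_distrib]
    refine Finset.sum_congr rfl fun i _ => (Finset.sum_add_distrib).symm
  have hSle : S ≤ D := by
    have h2S : S + S ≤ D + D := by
      rw [hDD, hS, ← Finset.sum_add_distrib]
      refine Finset.sum_le_sum fun i _ => ?_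
      rw [← Finset.sum_add_distrib]
      refine Finset.sum_le_sum fun j _ => ?_
      nlinarith [sq_nonneg (H i j * (u i - u j))]
    linarith
  have hSge : -D ≤ S := by
    have h2S : -(D + D) ≤ S + S := by
      rw [hDD, hS, ← Finset.sum_add_distrib, ← Finset.sum_neg_distrib]
      refine Finset.sum_le_sum fun i _ => ?_
      rw [← Finset.sum_add_distrib, ← Finset.sum_neg_distrib]
      refine Finset.sum_le_sum fun j _ => ?_
      nlinarith [sq_nonneg (H i j * (u i + u j))]
    linarith
  have hc : (0:ℝ) ≤ (r1 * r0) ^ 2 / (n - 1) := by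
    have hn1 : (1:ℝ) ≤ (n:ℝ) - 1 := by
      have : (2:ℝ) ≤ (n:ℝ) := by exact_mod_cast hn
      linarith
    positivity
  constructor
  · have : (0:ℝ) ≤ S + D := by linarith
    exact mul_nonneg hc this
  · have h1 : (r1 * r0) ^ 2 / (n - 1) * (S + D) ≤ (r1 * r0) ^ 2 / (n - 1) * (2 * D) := by
      apply mul_le_mul_of_nonneg_left _ hc
      linarith
    calc (r1 * r0) ^ 2 / (n - 1) * (S + D) ≤ (r1 * r0) ^ 2 / (n - 1) * (2 * D) := h1
      _ = 2 * (r1 * r0) ^ 2 / (n - 1) * D := by ring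
end
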